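/- arXiv:2101.04284 — 9 statements merged into one kernel-verified Lean document; each statement's English description precedes it below -/
import Mathlib

section
/- Let x : ℕ → ℕ be a finitely supported function with x_i = 0 for all i < 3, such that Σ_{i≥3} (5·i − 14)·x_i = 28 and, for every i, either x_i = 0 or x_i ≥ 3. Then x_i = 0 for all i ≥ 5, and (x_3, x_4) is one of (28, 0), (10, 3), (4, 4). -/
/-!
Every face size `i ≥ 3` has positive weight `5i - 14`, so each term of the sum is at most `28`.
A size `i ≥ 5` occurring at least three times would contribute `3 · 11 = 33 > 28`, so only
triangles and quadrilaterals occur and the identity reads `x₃ + 6 x₄ = 28`, in which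
only `x₄ ∈ {0, 3, 4}` survives.
-/

namespace FaceVector

lemma mul_le_sum_of_nonneg (w : ℕ → ℤ) (x : ℕ →₀ ℕ) (hw : ∀ j ∈ x.support, 0 ≤ w j)
    {i : ℕ} (hi : i ∈ x.support) :
    w i * x i ≤ ∑ j ∈ x.support, w j * x j :=
  Finset.single_le_sum (fun j hj => mul_nonneg (hw j hj) (Int.natCast_nonneg _)) hi

variable {x : ℕ →₀ ℕ}

lemma three_le_of_mem_support (h0 : ∀ i < 3, x i = 0) {i : ℕ} (hi : i ∈ x.support) : 3 ≤ i := by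
  by_contra h
  exact Finsupp.mem_support_iff.mp hi (h0 i (by omega))

lemma eq_zero_of_five_le (h0 : ∀ i < 3, x i = 0)
    (hsum : ∑ i ∈ x.support, ((5 * (i : ℤ) - 14) * (x i : ℤ)) = 28)
    (hmin : ∀ i, x i = 0 ∨ x i ≥ 3) {i : ℕ} (hi : 5 ≤ i) : x i = 0 := by
  by_contra hxi
  have hweight : ∀ j ∈ x.support, (0 : ℤ) ≤ 5 * j - 14 := fun j hj => by
    have := three_le_of_mem_support h0 hj
    omega
  have hle := mul_le_sum_of_nonneg (fun j => 5 * (j : ℤ) - 14) x hweight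
    (Finsupp.mem_support_iff.mpr hxi)
  have hx3 : (3 : ℤ) ≤ x i := by exact_mod_cast (hmin i).resolve_left hxi
  have hi5 : (5 : ℤ) ≤ i := by exact_mod_cast hi
  rw [hsum] at hle
  nlinarith

lemma support_subset_three_four (h0 : ∀ i < 3, x i = 0) (h5 : ∀ i ≥ 5, x i = 0) :
    x.support ⊆ {3, 4} := fun i hi => by
  have h3 := three_le_of_mem_support h0 hi
  have : i < 5 := by
    by_contra h
    exact Finsupp.mem_support_iff.mp hi (h5 i (by omega))
  simp only [Finset.mem_insert, Finset.mem_singleton]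
  omega

lemma pair_of_add_six_mul_eq {a b : ℕ} (h : a + 6 * b = 28) (hb : b = 0 ∨ b ≥ 3) : (a, b) = (28, 0) ∨ (a, b) = (10, 3) ∨ (a, b) = (4, 4) := by
  simp only [Prod.mk.injEq]
  omega

end FaceVector

open FaceVector in
/-- Enumeration of the possible face-vectors in the degree-7 case. -/
theorem degree_seven_face_vectors (x : ℕ →₀ ℕ)
    (h0 : ∀ i < 3, x i = 0)
    (hsum : ∑ i ∈ x.support, ((5 * (i : ℤ) - 14) * (x i : ℤ)) = 28)
    (hmin : ∀ i, x i = 0 ∨ x i ≥ 3) :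
    (∀ i ≥ 5, x i = 0) ∧
      ((x 3, x 4) = (28, 0) ∨ (x 3, x 4) = (10, 3) ∨ (x 3, x 4) = (4, 4)) := by
  have h5 : ∀ i ≥ 5, x i = 0 := fun i hi => eq_zero_of_five_le h0 hsum hmin hi
  refine ⟨h5, pair_of_add_six_mul_eq ?_ (hmin 4)⟩
  have hsum34 : (5 * (3 : ℤ) - 14) * x 3 + (5 * (4 : ℤ) - 14) * x 4 = 28 := by
    rw [← hsum]
    have := Finsupp.sum_of_support_subset x (support_subset_three_four h0 h5)
      (fun i n => (5 * (i : ℤ) - 14) * (n : ℤ)) (fun _ _ => by simp)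
    simpa [Finsupp.sum] using this.symm
  omega
end

section
/- The only triples of positive integers (i, j, f0) with 4 ≤ i < j, f0 ≥ 12, f0·(i·j − 2·i − 2·j) = 4·i·j (as integers), i ∣ f0, j ∣ f0, and f0 ≥ 3·j, are (4, 5, 40) and (4, 6, 24). -/
/-! Writing `D = i j - 2 i - 2 j`, the relation `f₀ D = 4 i j` forces `D > 0`, and `f₀ ≥ 3 j`
then gives `3 D ≤ 4 i`, i.e. `j (3 i - 6) ≤ 10 i`. As `j > i ≥ 4`, this leaves only `i = 4` with
`j ∈ {5, 6}`, and `f₀ = 4 i j / D` is `40` or `24`. -/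

theorem three_mul_defect_le {i j f : ℤ} (hi : 0 < i) (hj : 0 < j)
    (h : f * (i * j - 2 * i - 2 * j) = 4 * i * j) (hf : 3 * j ≤ f) :
    3 * (i * j - 2 * i - 2 * j) ≤ 4 * i := by
  have hD : 0 < i * j - 2 * i - 2 * j :=
    pos_of_mul_pos_right (by rw [h]; positivity) (by linarith)
  have : j * (3 * (i * j - 2 * i - 2 * j)) ≤ j * (4 * i) := by
    nlinarith [mul_le_mul_of_nonneg_right hf hD.le]
  exact le_of_mul_le_mul_left this hj

theorem eq_four_and_eq_five_or_six_of_three_mul_defect_le {i j : ℤ} (hi : 4 ≤ i) (hij : i < j)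
    (h : 3 * (i * j - 2 * i - 2 * j) ≤ 4 * i) : i = 4 ∧ (j = 5 ∨ j = 6) := by
  have hi5 : i ≤ 5 := by nlinarith
  have hj6 : j ≤ 6 := by nlinarith
  interval_cases i <;> omega

/-- Vertex type `(3^3, i^1, j^1)`: the only solutions are `(4,5,40)` and `(4,6,24)`. -/
theorem type_333ij (i j f0 : ℕ) :
    (0 < i ∧ 0 < j ∧ 0 < f0 ∧ 4 ≤ i ∧ i < j ∧ f0 ≥ 12 ∧
        (f0 : ℤ) * ((i : ℤ) * j - 2 * i - 2 * j) = 4 * (i : ℤ) * j ∧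
        i ∣ f0 ∧ j ∣ f0 ∧ f0 ≥ 3 * j) ↔
      ((i, j, f0) = (4, 5, 40) ∨ (i, j, f0) = (4, 6, 24)) := by
  constructor
  · rintro ⟨hi, hj, -, hi4, hij, -, heq, -, -, h3j⟩
    have hD := three_mul_defect_le (by positivity) (by positivity) heq (by exact_mod_cast h3j)
    obtain ⟨hi_eq, hj_eq⟩ :=
      eq_four_and_eq_five_or_six_of_three_mul_defect_le (by exact_mod_cast hi4)
        (by exact_mod_cast hij) hD
    obtain rfl : i = 4 := by omega
    rcases hj_eq with hj_eq | hj_eq <;> obtain rfl : j = _ := by exact_mod_cast hj_eq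
    all_goals norm_num at heq ⊢; omega
  · rintro (h | h) <;> simp only [Prod.mk.injEq] at h <;> obtain ⟨rfl, rfl, rfl⟩ := h <;> norm_num
end

section
/- The only triples of positive integers (i, j, f0) with i ≥ 4, j ≥ 3, f0 ≥ 12, f0·(5·i·j − 6·i − 12·j) = 12·i·j (as integers), i ∣ 2·f0, j ∣ f0, 2·f0 ≥ 3·i, and f0 ≥ 3·j, are (4, 4, 24) and (6, 3, 12). -/
/-! Since `f0 ≥ 12`, Euler's relation `f0 · (5ij − 6i − 12j) = 12ij` forces `5ij − 6i − 12j ≤ ij`,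
i.e. `(i − 3)(2j − 3) ≤ 9`. With `i ≥ 4` and `j ≥ 3` this leaves finitely many pairs `(i, j)`,
each of which determines `f0` if it admits one at all; the divisibility conditions `i ∣ 2 f0`,
`j ∣ f0` and the bound `f0 ≥ 3j` then rule out all but `(4, 4, 24)` and `(6, 3, 12)`. -/

theorem le_of_mul_eq_mul_of_le {α : Type*} [Semiring α] [LinearOrder α] [IsStrictOrderedRing α]
    {c f d n : α} (hc : 0 < c) (hcf : c ≤ f) (hn : 0 < n) (h : f * d = c * n) : d ≤ n := by
  have hd : 0 < d := pos_of_mul_pos_right (h ▸ mul_pos hc hn) (hc.trans_le hcf).le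
  exact le_of_mul_le_mul_left (h ▸ mul_le_mul_of_nonneg_right hcf hd.le) hc

theorem le_six_of_four_mul_mul_le {i j : ℕ} (hi : 4 ≤ i) (hj : 3 ≤ j)
    (h : 4 * i * j ≤ 6 * i + 12 * j) : i ≤ 6 ∧ j ≤ 6 := by
  constructor <;> nlinarith

/-- Type `[3^1, i^1, 3^1, j^1, i^1]`: the only solutions are `(4,4,24)` and `(6,3,12)`. -/
theorem type_3i3ji (i j f0 : ℕ) :
    (0 < i ∧ 0 < j ∧ 0 < f0 ∧ i ≥ 4 ∧ j ≥ 3 ∧ f0 ≥ 12 ∧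
        (f0 : ℤ) * (5 * (i : ℤ) * j - 6 * i - 12 * j) = 12 * (i : ℤ) * j ∧
        i ∣ 2 * f0 ∧ j ∣ f0 ∧ 2 * f0 ≥ 3 * i ∧ f0 ≥ 3 * j) ↔
      ((i, j, f0) = (4, 4, 24) ∨ (i, j, f0) = (6, 3, 12)) := by
  constructor
  · rintro ⟨-, -, -, hi, hj, hf, heq, hdi, hdj, -, hfj⟩
    have hle : 5 * (i : ℤ) * j - 6 * i - 12 * j ≤ i * j :=
      le_of_mul_eq_mul_of_le (c := 12) (f := (f0 : ℤ)) (n := i * j) (by norm_num)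
        (by exact_mod_cast hf) (by positivity) (by rw [heq]; ring)
    obtain ⟨hi6, hj6⟩ := le_six_of_four_mul_mul_le hi hj (by zify; linarith)
    simp only [Prod.mk.injEq]
    interval_cases i <;> interval_cases j <;> omega
  · rintro (h | h) <;> obtain ⟨rfl, rfl, rfl⟩ := Prod.mk.injEq _ _ _ _ ▸ h <;> norm_num
end

section
/- The only triples of positive integers (i, j, f0) with i ≥ 4, j ≥ 4, f0 ≥ 12, f0·(2·i·j − 3·i − 6·j) = 6·i·j (as integers), 3 ∣ f0, i ∣ 2·f0, j ∣ f0, 2·f0 ≥ 3·i, and f0 ≥ 3·j, are (4, 7, 84), (4, 8, 48), (4, 9, 36), (4, 10, 30), (5, 4, 120), (5, 5, 30), (6, 4, 24), (6, 5, 15) and (8, 4, 12). -/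
/-! Since `f₀ ≥ 3j`, Euler's relation `f₀ (2ij − 3i − 6j) = 6ij` forces `2ij − 3i − 6j ≤ 2i`,
i.e. `(2i − 6)(2j − 5) ≤ 30`. With `i, j ≥ 4` this leaves `4 ≤ i ≤ 8` and `4 ≤ j ≤ 10`, and in
each of these cases Euler's relation determines `f₀`, which the divisibility and size
conditions then accept or reject. -/

namespace SemiEquivelar

theorem euler_denominator_le {i j f : ℤ} (hi : 0 < i) (hj : 0 < j) (hjf : 3 * j ≤ f)
    (heuler : f * (2 * i * j - 3 * i - 6 * j) = 6 * i * j) :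
    2 * i * j - 3 * i - 6 * j ≤ 2 * i := by
  have hD : 0 < 2 * i * j - 3 * i - 6 * j := by
    refine pos_of_mul_pos_right (a := f) ?_ (by linarith)
    rw [heuler]
    positivity
  have h : 3 * j * (2 * i * j - 3 * i - 6 * j) ≤ 3 * j * (2 * i) :=
    calc 3 * j * (2 * i * j - 3 * i - 6 * j) ≤ f * (2 * i * j - 3 * i - 6 * j) :=
          mul_le_mul_of_nonneg_right hjf hD.le
      _ = 3 * j * (2 * i) := by rw [heuler]; ring
  exact le_of_mul_le_mul_left h (by positivity)

theorem le_eight_and_le_ten {i j : ℤ} (hi : 4 ≤ i) (hj : 4 ≤ j)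
    (h : 2 * i * j - 3 * i - 6 * j ≤ 2 * i) : i ≤ 8 ∧ j ≤ 10 := by
  have key : (2 * i - 6) * (2 * j - 5) ≤ 30 := by linarith
  constructor <;> nlinarith

end SemiEquivelar

open SemiEquivelar in
/-- Type `[3^1, i^1, j^1, i^1]`: the nine solutions. -/
theorem type_3iji (i j f0 : ℕ) :
    (0 < i ∧ 0 < j ∧ 0 < f0 ∧ i ≥ 4 ∧ j ≥ 4 ∧ f0 ≥ 12 ∧
        (f0 : ℤ) * (2 * (i : ℤ) * j - 3 * i - 6 * j) = 6 * (i : ℤ) * j ∧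
        3 ∣ f0 ∧ i ∣ 2 * f0 ∧ j ∣ f0 ∧ 2 * f0 ≥ 3 * i ∧ f0 ≥ 3 * j) ↔
      ((i, j, f0) = (4, 7, 84) ∨ (i, j, f0) = (4, 8, 48) ∨ (i, j, f0) = (4, 9, 36) ∨
        (i, j, f0) = (4, 10, 30) ∨ (i, j, f0) = (5, 4, 120) ∨ (i, j, f0) = (5, 5, 30) ∨
        (i, j, f0) = (6, 4, 24) ∨ (i, j, f0) = (6, 5, 15) ∨ (i, j, f0) = (8, 4, 12)) := by
  simp only [Prod.mk.injEq]
  constructor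
  · rintro ⟨hi0, hj0, -, hi, hj, -, heuler, h3, hif, hjf, -, hjf'⟩
    have hbound :=
      euler_denominator_le (by exact_mod_cast hi0) (by exact_mod_cast hj0) (by exact_mod_cast hjf') heuler
    obtain ⟨hi8, hj10⟩ := le_eight_and_le_ten (by exact_mod_cast hi) (by exact_mod_cast hj) hbound
    replace hi8 : i ≤ 8 := by exact_mod_cast hi8
    replace hj10 : j ≤ 10 := by exact_mod_cast hj10
    interval_cases i <;> interval_cases j <;> norm_num <;> omega
  · rintro (h | h | h | h | h | h | h | h | h) <;> obtain ⟨rfl, rfl, rfl⟩ := h <;> norm_num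
end

section
/- The only quadruples of positive integers (i, j, a, f0) with i ≥ 4, 4 ≤ j ≤ a, f0 ≥ 12, f0·(i·j·a − i·j − i·a − 2·j·a) = 2·i·j·a (as integers), i ∣ 2·f0, j ∣ f0, a ∣ f0, 2·f0 ≥ 3·i, f0 ≥ 3·j, and f0 ≥ 3·a, are (4, 4, 5, 40), (4, 4, 6, 24), (4, 5, 5, 20), (5, 4, 4, 20) and (6, 4, 4, 12). -/
/-!
Dividing Euler's relation `f0 * (i*j*a - i*j - i*a - 2*j*a) = 2*i*j*a` by `i*j*a*f0` gives
`2/i + 1/j + 1/a = 1 - 2/f0`, and `f0 ≥ 12` turns this into `2/i + 1/j + 1/a ≥ 5/6`.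
Together with `4 ≤ i` and `4 ≤ j ≤ a` this forces `i ≤ 6`, `j ≤ 6` and `a ≤ 12`; in each of the
remaining cases Euler's relation determines `f0`, and `f0 ≥ 3 * j`, `f0 ≥ 3 * a` discard all
but the five listed solutions.
-/

lemma mul_le_of_le_of_mul_eq {m n d c : ℤ} (hm : 0 ≤ m) (hmn : m ≤ n) (hc : 0 ≤ c)
    (h : n * d = c) : m * d ≤ c := by
  rcases le_total 0 d with hd | hd
  · exact h ▸ mul_le_mul_of_nonneg_right hmn hd
  · exact (mul_nonpos_of_nonneg_of_nonpos hm hd).trans hc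

/-- `2/i + 1/j + 1/a ≥ 5/6`, with denominators cleared. -/
lemma reciprocal_sum_bound {i j a f0 : ℕ} (hf : 12 ≤ f0)
    (heq : (f0 : ℤ) * ((i : ℤ) * j * a - i * j - i * a - 2 * j * a) = 2 * (i : ℤ) * j * a) :
    10 * i * j * a ≤ 12 * i * j + 12 * i * a + 24 * j * a := by
  have := mul_le_of_le_of_mul_eq (m := 12) (by norm_num) (by exact_mod_cast hf) (by positivity) heq
  zify
  linarith

lemma bounds_of_reciprocal_sum_bound {i j a : ℕ} (hi : 4 ≤ i) (hj : 4 ≤ j) (hja : j ≤ a)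
    (h : 10 * i * j * a ≤ 12 * i * j + 12 * i * a + 24 * j * a) :
    i ≤ 6 ∧ j ≤ 6 ∧ a ≤ 12 := by
  refine ⟨?_, ?_, ?_⟩
  · by_contra! hi7
    nlinarith [Nat.mul_le_mul_left (i * j) (hj.trans hja), Nat.mul_le_mul_left (i * a) hj,
      Nat.mul_le_mul_left (j * a) hi7]
  · by_contra! hj7
    nlinarith [Nat.mul_le_mul_left (i * j) (hj.trans hja), Nat.mul_le_mul_left (i * a) hj7,
      Nat.mul_le_mul_left (j * a) hi, Nat.mul_le_mul_left i hja]
  · by_contra! ha13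
    nlinarith [Nat.mul_le_mul_left (i * j) ha13, Nat.mul_le_mul_left (i * a) hj,
      Nat.mul_le_mul_left (j * a) hi]

/-- Vertex types `(i^2, j^1, a^1)` and `[i^1, j^1, i^1, a^1]`: the five solutions. -/
theorem type_iija (i j a f0 : ℕ) :
    (0 < i ∧ 0 < j ∧ 0 < a ∧ 0 < f0 ∧ i ≥ 4 ∧ 4 ≤ j ∧ j ≤ a ∧ f0 ≥ 12 ∧
        (f0 : ℤ) * ((i : ℤ) * j * a - i * j - i * a - 2 * j * a) = 2 * (i : ℤ) * j * a ∧
        i ∣ 2 * f0 ∧ j ∣ f0 ∧ a ∣ f0 ∧ 2 * f0 ≥ 3 * i ∧ f0 ≥ 3 * j ∧ f0 ≥ 3 * a) ↔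
      ((i, j, a, f0) = (4, 4, 5, 40) ∨ (i, j, a, f0) = (4, 4, 6, 24) ∨
        (i, j, a, f0) = (4, 5, 5, 20) ∨ (i, j, a, f0) = (5, 4, 4, 20) ∨
        (i, j, a, f0) = (6, 4, 4, 12)) := by
  constructor
  · rintro ⟨-, -, -, -, hi, hj, hja, hf, heq, -, -, -, -, h3j, h3a⟩
    obtain ⟨hi6, hj6, ha12⟩ :=
      bounds_of_reciprocal_sum_bound hi hj hja (reciprocal_sum_bound hf heq)
    simp only [Prod.mk.injEq]
    interval_cases i <;> interval_cases j <;> interval_cases a <;> omega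
  · rintro (h | h | h | h | h) <;> simp only [Prod.mk.injEq] at h <;>
      obtain ⟨rfl, rfl, rfl, rfl⟩ := h <;> norm_num
end

section
/- The only triple of positive integers (i, j, f0) with i odd, i ≥ 5, j ≥ 4, j ≠ i, f0 ≥ 12, f0·(i·j − 2·i − 2·j) = 2·i·j (as integers), i ∣ 2·f0, j ∣ 2·f0, 2·f0 ≥ 3·i, and 2·f0 ≥ 3·j, is (5, 4, 20). -/
/-! With at least twelve vertices, `f0 (ij - 2i - 2j) = 2ij` forces `12 (ij - 2i - 2j) ≤ 2ij`,
i.e. `5ij ≤ 12(i + j)`. For `i, j ≥ 5` the left side already wins, so `j = 4`; then `i ≤ 6`,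
and oddness leaves `i = 5`, whence `f0 = 20`. -/

lemma five_mul_mul_le_of_vertex_count_ge_twelve {i j f : ℤ} (hi : 0 ≤ i) (hj : 0 ≤ j)
    (hf : 12 ≤ f) (h : f * (i * j - 2 * i - 2 * j) = 2 * i * j) :
    5 * i * j ≤ 12 * (i + j) := by
  have hexcess : 0 ≤ i * j - 2 * i - 2 * j := by
    by_contra! hneg
    nlinarith [mul_nonneg hi hj]
  nlinarith

lemma eq_four_and_le_six_of_five_mul_mul_le {i j : ℕ} (hi : 5 ≤ i) (hj : 4 ≤ j)
    (h : 5 * i * j ≤ 12 * (i + j)) : j = 4 ∧ i ≤ 6 := by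
  have hj4 : j = 4 := by
    by_contra hne
    have hj5 : (5 : ℤ) ≤ j := by omega
    zify at hi h
    nlinarith [mul_nonneg (sub_nonneg.2 hi) (sub_nonneg.2 hj5)]
  subst hj4
  exact ⟨rfl, by omega⟩

/-- Type `[i^1, j^1, i^1, j^1]` with `i` odd: the only solution is `(5, 4, 20)`. -/
theorem type_ijij (i j f0 : ℕ) :
    (0 < i ∧ 0 < j ∧ 0 < f0 ∧ Odd i ∧ i ≥ 5 ∧ j ≥ 4 ∧ j ≠ i ∧ f0 ≥ 12 ∧
        (f0 : ℤ) * ((i : ℤ) * j - 2 * i - 2 * j) = 2 * (i : ℤ) * j ∧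
        i ∣ 2 * f0 ∧ j ∣ 2 * f0 ∧ 2 * f0 ≥ 3 * i ∧ 2 * f0 ≥ 3 * j) ↔
      (i, j, f0) = (5, 4, 20) := by
  constructor
  · rintro ⟨-, -, -, hodd, hi5, hj4, -, hf12, heq, -, -, -, -⟩
    have hbound : 5 * i * j ≤ 12 * (i + j) := by
      have := five_mul_mul_le_of_vertex_count_ge_twelve (Int.natCast_nonneg i)
        (Int.natCast_nonneg j) (by exact_mod_cast hf12) heq
      exact_mod_cast this
    obtain ⟨rfl, hi6⟩ := eq_four_and_le_six_of_five_mul_mul_le hi5 hj4 hbound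
    obtain rfl : i = 5 := by obtain ⟨k, rfl⟩ := hodd; omega
    obtain rfl : f0 = 20 := by push_cast at heq; omega
    rfl
  · rintro h
    simp only [Prod.mk.injEq] at h
    obtain ⟨rfl, rfl, rfl⟩ := h
    norm_num [Nat.odd_iff]
end

section
/- The only triples of positive integers (i, j, f0) with 4 ≤ i < j, f0 ≥ 12, f0·(i·j − i − 3·j) = 2·i·j (as integers), i ∣ 3·f0, j ∣ f0, f0 ≥ i, and f0 ≥ 3·j, are (4, 5, 40) and (4, 6, 24). -/
/-! Substituting `f0 ≥ 3j` into `f0 (ij - i - 3j) = 2ij` gives `3 (ij - i - 3j) ≤ 2i`, that is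
`3ij ≤ 5i + 9j < 14j`. Hence `i = 4`, then `j ≤ 6`, and `f0 (j - 4) = 8j` leaves `f0 = 40` or
`f0 = 24`. -/

theorem eq_four_and_le_six_of_mul_eq {i j f : ℤ} (hi : 4 ≤ i) (hij : i < j) (hf : 3 * j ≤ f)
    (heq : f * (i * j - i - 3 * j) = 2 * i * j) : i = 4 ∧ j ≤ 6 := by
  have hpos : 0 < i * j - i - 3 * j := by nlinarith
  have hle : 3 * j * (i * j - i - 3 * j) ≤ 2 * i * j :=
    heq ▸ mul_le_mul_of_nonneg_right hf hpos.le
  have hdefect : 3 * (i * j - i - 3 * j) ≤ 2 * i := by nlinarith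
  have hi4 : i = 4 := by nlinarith
  subst hi4
  exact ⟨rfl, by linarith⟩

/-- Vertex type `(i^3, j^1)`: the only solutions are `(4,5,40)` and `(4,6,24)`. -/
theorem type_iiij (i j f0 : ℕ) :
    (0 < i ∧ 0 < j ∧ 0 < f0 ∧ 4 ≤ i ∧ i < j ∧ f0 ≥ 12 ∧
        (f0 : ℤ) * ((i : ℤ) * j - i - 3 * j) = 2 * (i : ℤ) * j ∧
        i ∣ 3 * f0 ∧ j ∣ f0 ∧ f0 ≥ i ∧ f0 ≥ 3 * j) ↔
      ((i, j, f0) = (4, 5, 40) ∨ (i, j, f0) = (4, 6, 24)) := by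
  constructor
  · rintro ⟨-, -, -, hi, hij, -, heq, -, -, -, hf⟩
    obtain ⟨hi4, hj6⟩ := eq_four_and_le_six_of_mul_eq (by exact_mod_cast hi) (by exact_mod_cast hij)
      (by exact_mod_cast hf) heq
    obtain rfl : i = 4 := by exact_mod_cast hi4
    have hj : j = 5 ∨ j = 6 := by omega
    rcases hj with rfl | rfl <;> push_cast at heq <;> simp only [Prod.mk.injEq, true_and] <;> omega
  · rintro (h | h) <;> simp only [Prod.mk.injEq] at h <;> obtain ⟨rfl, rfl, rfl⟩ := h <;> norm_num
end

section
/- The only quadruples of positive integers (i, j, a, f0) with i, j, a even, 4 ≤ i < j < a, f0 ≥ 12, f0·(i·j·a − 2·i·j − 2·i·a − 2·j·a) = 4·i·j·a (as integers), i ∣ f0, j ∣ f0, a ∣ f0, and f0 ≥ 3·a, are (4, 6, 14, 168), (4, 6, 16, 96), (4, 6, 18, 72), (4, 6, 20, 60), (4, 8, 10, 80) and (4, 8, 12, 48). -/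
/-!
Since `f0 ≥ 3a` and the Euler relation `f0 · D = 4ija` forces `D = ija - 2ij - 2ia - 2ja > 0`,
we get `3aD ≤ 4ija`, i.e. `3ija ≤ 10ij + 6ia + 6ja`, or `6/i + 6/j + 10/a ≥ 3`. The left side
decreases in each variable, which leaves only `i = 4` with `j = 6, a ≤ 20` or `j = 8, a ≤ 13`;
in each of these finitely many cases the Euler relation is linear in `f0`.
-/

section OrderedRing

variable {R : Type*} [CommRing R] [LinearOrder R] [IsStrictOrderedRing R]

theorem three_mul_le_of_euler_relation {i j a f : R} (hi : 0 ≤ i) (hj : 0 ≤ j) (ha : 0 < a)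
    (heq : f * (i * j * a - 2 * i * j - 2 * i * a - 2 * j * a) = 4 * i * j * a)
    (hf : 3 * a ≤ f) :
    3 * i * j * a ≤ 10 * i * j + 6 * i * a + 6 * j * a := by
  set D := i * j * a - 2 * i * j - 2 * i * a - 2 * j * a
  have hD : 0 ≤ D :=
    nonneg_of_mul_nonneg_right (heq ▸ by positivity : 0 ≤ f * D) (by linarith)
  have : a * (3 * D) ≤ a * (4 * i * j) :=
    calc a * (3 * D) = 3 * a * D := by ring
      _ ≤ f * D := mul_le_mul_of_nonneg_right hf hD
      _ = a * (4 * i * j) := by rw [heq]; ring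
  linarith [le_of_mul_le_mul_left this ha]

end OrderedRing

theorem lt_of_six_le_of_eight_le_of_ten_le {i j a : ℕ} (hi : 6 ≤ i) (hj : 8 ≤ j) (ha : 10 ≤ a) :
    10 * i * j + 6 * i * a + 6 * j * a < 3 * i * j * a := by
  obtain ⟨x, rfl⟩ := Nat.exists_eq_add_of_le hi
  obtain ⟨y, rfl⟩ := Nat.exists_eq_add_of_le hj
  obtain ⟨z, rfl⟩ := Nat.exists_eq_add_of_le ha
  ring_nf
  omega

theorem lt_of_ten_le_of_twelve_le {j a : ℕ} (hj : 10 ≤ j) (ha : 12 ≤ a) :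
    20 * j + 12 * a < 3 * j * a := by
  obtain ⟨y, rfl⟩ := Nat.exists_eq_add_of_le hj
  obtain ⟨z, rfl⟩ := Nat.exists_eq_add_of_le ha
  ring_nf
  omega

theorem eq_four_six_or_eq_four_eight_of_three_mul_le {i j a : ℕ}
    (hi : i % 2 = 0) (hj : j % 2 = 0) (ha : a % 2 = 0) (hi4 : 4 ≤ i) (hij : i < j) (hja : j < a)
    (h : 3 * i * j * a ≤ 10 * i * j + 6 * i * a + 6 * j * a) :
    i = 4 ∧ j = 6 ∧ a ≤ 20 ∨ i = 4 ∧ j = 8 ∧ a ≤ 13 := by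
  obtain rfl : i = 4 := by
    by_contra hne
    have := lt_of_six_le_of_eight_le_of_ten_le (i := i) (j := j) (a := a) (by omega) (by omega)
      (by omega)
    omega
  by_cases hj10 : 10 ≤ j
  · have := lt_of_ten_le_of_twelve_le hj10 (by omega : 12 ≤ a)
    nlinarith
  · obtain rfl | rfl : j = 6 ∨ j = 8 := by omega
    all_goals omega

/-- Type `[i^1, j^1, a^1]` with `i < j < a` all even: the six solutions. -/
theorem type_ija (i j a f0 : ℕ) :
    (0 < i ∧ 0 < j ∧ 0 < a ∧ 0 < f0 ∧ Even i ∧ Even j ∧ Even a ∧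
        4 ≤ i ∧ i < j ∧ j < a ∧ f0 ≥ 12 ∧
        (f0 : ℤ) * ((i : ℤ) * j * a - 2 * i * j - 2 * i * a - 2 * j * a) =
          4 * (i : ℤ) * j * a ∧
        i ∣ f0 ∧ j ∣ f0 ∧ a ∣ f0 ∧ f0 ≥ 3 * a) ↔
      ((i, j, a, f0) = (4, 6, 14, 168) ∨ (i, j, a, f0) = (4, 6, 16, 96) ∨
        (i, j, a, f0) = (4, 6, 18, 72) ∨ (i, j, a, f0) = (4, 6, 20, 60) ∨
        (i, j, a, f0) = (4, 8, 10, 80) ∨ (i, j, a, f0) = (4, 8, 12, 48)) := by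
  constructor
  · rintro ⟨-, -, ha, -, hei, hej, hea, hi4, hij, hja, -, heq, -, -, -, hf⟩
    rw [Nat.even_iff] at hei hej hea
    have hbound : 3 * i * j * a ≤ 10 * i * j + 6 * i * a + 6 * j * a := by
      exact_mod_cast three_mul_le_of_euler_relation (by positivity) (by positivity)
        (by exact_mod_cast ha) heq (by exact_mod_cast hf)
    obtain ⟨rfl, rfl, ha'⟩ | ⟨rfl, rfl, ha'⟩ :=
      eq_four_six_or_eq_four_eight_of_three_mul_le hei hej hea hi4 hij hja hbound
    all_goals interval_cases a <;> simp only [Prod.mk.injEq, true_and] <;> omega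
  · rintro (h | h | h | h | h | h) <;> simp only [Prod.mk.injEq] at h <;>
      obtain ⟨rfl, rfl, rfl, rfl⟩ := h <;> decide
end

section
/- The only triples of positive integers (i, j, f0) with i even, i ≥ 4, j ≥ 3, j ≠ i, f0 ≥ 12, f0·(i·j − 2·i − 4·j) = 4·i·j (as integers), i ∣ 2·f0, j ∣ f0, 2·f0 ≥ 3·i, and f0 ≥ 3·j, are (6, 7, 84), (6, 8, 48), (6, 9, 36), (6, 10, 30), (8, 5, 40), (8, 6, 24), (10, 4, 40), (10, 5, 20), (12, 4, 24), (14, 3, 84), (16, 3, 48), (18, 3, 36) and (20, 3, 30). -/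
/-!
Write `D = i j - 2 i - 4 j` for the defect in the Euler relation `f₀ D = 4 i j`; it is positive,
which already excludes `i = 4`. The face-count bounds `f₀ ≥ 3 j` and `2 f₀ ≥ 3 i` become
`3 D ≤ 4 i` and `3 D ≤ 8 j` after multiplying by `D`, i.e. `(3 i - 12)(3 j - 10) ≤ 120` and
`(3 i - 20)(j - 2) ≤ 40`. Hence `5 ≤ i ≤ 20` and `j ≤ 16`, and for each of these finitely many
pairs `f₀` is determined by the Euler relation.
-/

def IsAdmissible (i j f0 : ℕ) : Prop :=
  0 < i ∧ 0 < j ∧ 0 < f0 ∧ Even i ∧ i ≥ 4 ∧ j ≥ 3 ∧ j ≠ i ∧ f0 ≥ 12 ∧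
    (f0 : ℤ) * ((i : ℤ) * j - 2 * i - 4 * j) = 4 * (i : ℤ) * j ∧
    i ∣ 2 * f0 ∧ j ∣ f0 ∧ 2 * f0 ≥ 3 * i ∧ f0 ≥ 3 * j

def admissibleSolutions : Finset (ℕ × ℕ × ℕ) :=
  {(6, 7, 84), (6, 8, 48), (6, 9, 36), (6, 10, 30), (8, 5, 40), (8, 6, 24), (10, 4, 40),
    (10, 5, 20), (12, 4, 24), (14, 3, 84), (16, 3, 48), (18, 3, 36), (20, 3, 30)}

theorem isAdmissible_of_mem_admissibleSolutions :
    ∀ s ∈ admissibleSolutions, IsAdmissible s.1 s.2.1 s.2.2 := by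
  unfold IsAdmissible
  decide

section EulerDefect

variable {i j f0 : ℤ}

theorem defect_pos (hi : 0 < i) (hj : 0 < j) (hf : 0 ≤ f0)
    (h : f0 * (i * j - 2 * i - 4 * j) = 4 * i * j) : 0 < i * j - 2 * i - 4 * j :=
  pos_of_mul_pos_right (h ▸ by positivity) hf

theorem five_le_of_defect_pos (hi : 4 ≤ i) (hD : 0 < i * j - 2 * i - 4 * j) : 5 ≤ i := by
  obtain rfl | hi := hi.eq_or_lt
  · linarith
  · exact hi

theorem mul_le_of_three_mul_le (hj : 0 < j) (hD : 0 < i * j - 2 * i - 4 * j)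
    (h : f0 * (i * j - 2 * i - 4 * j) = 4 * i * j) (hf : 3 * j ≤ f0) :
    (3 * i - 12) * (3 * j - 10) ≤ 120 := by
  have : 3 * (i * j - 2 * i - 4 * j) ≤ 4 * i := by
    nlinarith [mul_le_mul_of_nonneg_right hf hD.le]
  nlinarith

theorem mul_le_of_three_mul_le_two_mul (hi : 0 < i) (hD : 0 < i * j - 2 * i - 4 * j)
    (h : f0 * (i * j - 2 * i - 4 * j) = 4 * i * j) (hf : 3 * i ≤ 2 * f0) :
    (3 * i - 20) * (j - 2) ≤ 40 := by
  have : 3 * (i * j - 2 * i - 4 * j) ≤ 8 * j := by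
    nlinarith [mul_le_mul_of_nonneg_right hf hD.le]
  nlinarith

end EulerDefect

theorem mem_admissibleSolutions_of_bounded {i j f0 : ℕ} (hi5 : 5 ≤ i) (hi20 : i ≤ 20)
    (hj3 : 3 ≤ j) (hj16 : j ≤ 16) (hev : i % 2 = 0)
    (h : f0 * i * j = 4 * i * j + 2 * f0 * i + 4 * f0 * j) (hfi : 3 * i ≤ 2 * f0)
    (hfj : 3 * j ≤ f0) : (i, j, f0) ∈ admissibleSolutions := by
  simp only [admissibleSolutions, Finset.mem_insert, Finset.mem_singleton, Prod.mk.injEq]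
  interval_cases i <;> try omega
  all_goals interval_cases j <;> first | (exfalso; omega) | (norm_num; omega)

theorem mem_admissibleSolutions_of_isAdmissible {i j f0 : ℕ} (h : IsAdmissible i j f0) :
    (i, j, f0) ∈ admissibleSolutions := by
  obtain ⟨hi, hj, -, hev, hi4, hj3, -, -, heq, -, -, hfi, hfj⟩ := h
  have hD := defect_pos (by exact_mod_cast hi) (by exact_mod_cast hj) (Nat.cast_nonneg f0) heq
  have hi5 : (5 : ℤ) ≤ i := five_le_of_defect_pos (by exact_mod_cast hi4) hD
  have hj16 : (j : ℤ) ≤ 16 := by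
    nlinarith [mul_le_of_three_mul_le (by exact_mod_cast hj) hD heq (by exact_mod_cast hfj)]
  have hi20 : (i : ℤ) ≤ 20 := by
    have hj3 : (3 : ℤ) ≤ j := by exact_mod_cast hj3
    nlinarith [mul_le_of_three_mul_le_two_mul (by exact_mod_cast hi) hD heq
      (by exact_mod_cast hfi)]
  refine mem_admissibleSolutions_of_bounded (by exact_mod_cast hi5) (by exact_mod_cast hi20)
    hj3 (by exact_mod_cast hj16) (Nat.even_iff.mp hev) ?_ hfi hfj
  zify
  linear_combination heq

theorem isAdmissible_iff_mem_admissibleSolutions {i j f0 : ℕ} :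
    IsAdmissible i j f0 ↔ (i, j, f0) ∈ admissibleSolutions :=
  ⟨mem_admissibleSolutions_of_isAdmissible, isAdmissible_of_mem_admissibleSolutions _⟩

/-- Type `[i^2, j^1]` with `i` even: the thirteen solutions. -/
theorem type_iij (i j f0 : ℕ) :
    (0 < i ∧ 0 < j ∧ 0 < f0 ∧ Even i ∧ i ≥ 4 ∧ j ≥ 3 ∧ j ≠ i ∧ f0 ≥ 12 ∧
        (f0 : ℤ) * ((i : ℤ) * j - 2 * i - 4 * j) = 4 * (i : ℤ) * j ∧
        i ∣ 2 * f0 ∧ j ∣ f0 ∧ 2 * f0 ≥ 3 * i ∧ f0 ≥ 3 * j) ↔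
      ((i, j, f0) = (6, 7, 84) ∨ (i, j, f0) = (6, 8, 48) ∨ (i, j, f0) = (6, 9, 36) ∨
        (i, j, f0) = (6, 10, 30) ∨ (i, j, f0) = (8, 5, 40) ∨ (i, j, f0) = (8, 6, 24) ∨
        (i, j, f0) = (10, 4, 40) ∨ (i, j, f0) = (10, 5, 20) ∨ (i, j, f0) = (12, 4, 24) ∨
        (i, j, f0) = (14, 3, 84) ∨ (i, j, f0) = (16, 3, 48) ∨ (i, j, f0) = (18, 3, 36) ∨
        (i, j, f0) = (20, 3, 30)) := by
  change IsAdmissible i j f0 ↔ _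
  rw [isAdmissible_iff_mem_admissibleSolutions]
  simp only [admissibleSolutions, Finset.mem_insert, Finset.mem_singleton]
end
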